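/- arXiv:0708.0448 — 4 statements merged into one kernel-verified Lean document; each statement's English description precedes it below -/
import Mathlib

section
/- Let C be a finite-dimensional chain complex over Z/2Z with a finite filtration F_m, and [y] ∈ H(C*) nonzero. Define τ*_{[y]} = min{m : ∃ α ∈ Im(I_m : H(F_m) → H(C)) with ⟨[y], α⟩ ≠ 0}, and define τ_{[y]} on the dual filtered complex by the filtration G_k of C* whose subcomplex G_k is the annihilator of F_{-k-1} (so that C*/G_{-m-1} ≅ F_m*). Then τ_{[y]}(dual filtration) = -τ*_{[y]}. -/
/-- Duality for the filtration invariants (abstract content of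
Proposition 3.3: `τ_{[y]}(-Y,K) = -τ*_{[y]}(Y,K)`).  Let `(V, d)` be a
finite-dimensional chain complex over `ℤ/2ℤ` with a finite exhaustive
filtration by subcomplexes `F m`.  The dual complex `(V*, d*)` carries the
filtration `G k = Ann(F (-k-1))`.  Let `y` be a cocycle representing a
nonzero class of `H(C*)`.  If `t` is the minimum defining
`τ_{[y]}` for the dual filtration and `t'` is the minimum defining
`τ*_{[y]} = min {m : ∃ α ∈ Im I_m, ⟨[y], α⟩ ≠ 0}`, then `t = -t'`. -/
theorem tau_dual_eq_neg_tau_star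
    (V : Type) [AddCommGroup V] [Module (ZMod 2) V] [FiniteDimensional (ZMod 2) V]
    (d : V →ₗ[ZMod 2] V) (hd : ∀ v, d (d v) = 0)
    (F : ℤ → Submodule (ZMod 2) V)
    (hmono : ∀ ⦃m m' : ℤ⦄, m ≤ m' → F m ≤ F m')
    (hinv : ∀ m, F m ≤ (F m).comap d)
    (j : ℤ) (hbot : ∀ m ≤ -j, F m = ⊥)
    (n : ℤ) (htop : ∀ m ≥ n, F m = ⊤)
    (y : Module.Dual (ZMod 2) V) (hy : LinearMap.dualMap d y = 0)
    (hy0 : y ∉ LinearMap.range (LinearMap.dualMap d))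
    (t t' : ℤ)
    (ht : IsLeast {k : ℤ | ∃ φ ∈ (F (-k - 1)).dualAnnihilator,
      LinearMap.dualMap d φ = 0 ∧ y - φ ∈ LinearMap.range (LinearMap.dualMap d)} t)
    (ht' : IsLeast {m : ℤ | ∃ x ∈ F m, d x = 0 ∧ y x ≠ 0} t') :
    t = -t' := by
  -- Key claim: -t' belongs to the set defining t.
  have hmem : (-t' : ℤ) ∈ {k : ℤ | ∃ φ ∈ (F (-k - 1)).dualAnnihilator,
      LinearMap.dualMap d φ = 0 ∧ y - φ ∈ LinearMap.range (LinearMap.dualMap d)} := by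
    have hzero : ∀ x ∈ F (-(-t') - 1), d x = 0 → y x = 0 := by
      intro x hx hdx
      by_contra h
      have := ht'.2 ⟨x, hx, hdx, h⟩
      omega
    set p := F (-(-t') - 1) with hp
    let D : p →ₗ[ZMod 2] V := d.comp p.subtype
    let f : p →ₗ[ZMod 2] ZMod 2 := y.comp p.subtype
    have hker : LinearMap.ker D ≤ LinearMap.ker f := by
      intro x hx
      simp only [LinearMap.mem_ker, D, f, LinearMap.comp_apply, Submodule.subtype_apply] at *
      exact hzero x x.2 hx
    let fbar := (LinearMap.ker D).liftQ f hker
    let g : LinearMap.range D →ₗ[ZMod 2] ZMod 2 :=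
      fbar.comp D.quotKerEquivRange.symm.toLinearMap
    obtain ⟨ψ, hψ⟩ := g.exists_extend
    have hψd : ∀ x : p, ψ (d x) = y x := by
      intro x
      have h1 : D.quotKerEquivRange (Submodule.Quotient.mk x) = ⟨D x, LinearMap.mem_range_self D x⟩ :=
        Subtype.ext (D.quotKerEquivRange_apply_mk x)
      have h2 : ψ (d x) = g ⟨D x, LinearMap.mem_range_self D x⟩ := by
        have := LinearMap.congr_fun hψ ⟨D x, LinearMap.mem_range_self D x⟩
        simpa [D] using this
      rw [h2]
      have h3 : g ⟨D x, LinearMap.mem_range_self D x⟩ = fbar (Submodule.Quotient.mk x) := by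
        simp only [g, LinearMap.comp_apply, LinearEquiv.coe_toLinearMap]
        rw [← h1, LinearEquiv.symm_apply_apply]
      rw [h3]
      simp [fbar, f]
    refine ⟨y - LinearMap.dualMap d ψ, ?_, ?_, ?_⟩
    · rw [Submodule.mem_dualAnnihilator]
      intro w hw
      have := hψd ⟨w, hw⟩
      simp only [LinearMap.sub_apply, LinearMap.dualMap_apply]
      simp only at this
      rw [this]; ring
    · ext v
      have hyv : y (d v) = 0 := by
        have := LinearMap.congr_fun hy v
        simpa using this
      simp [LinearMap.dualMap_apply, hyv, hd v]
    · exact ⟨ψ, by abel⟩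
  have h1 : t ≤ -t' := ht.2 hmem
  -- Conversely, t ∈ S gives a cohomologous cocycle vanishing on F (-t-1)
  obtain ⟨φ, hφ, hdφ, ψ, hψ⟩ := ht.1
  obtain ⟨x, hx, hdx, hyx⟩ := ht'.1
  have h2 : -t - 1 < t' := by
    by_contra h
    push_neg at h
    have hx' : x ∈ F (-t - 1) := hmono h hx
    have hφx : φ x = 0 := (Submodule.mem_dualAnnihilator φ).mp hφ x hx'
    have : y x = 0 := by
      have h4 := LinearMap.congr_fun hψ x
      simp only [LinearMap.dualMap_apply, LinearMap.sub_apply, hdx, hφx, map_zero, sub_zero] at h4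
      exact h4.symm
    exact hyx this
  omega
end

section
/- Let C and C' be finite-dimensional filtered chain complexes over Z/2Z with filtrations F_m ⊆ C, F'_m ⊆ C', and give C ⊗ C' the filtration (F⊗F')_m = image of ⊕_{m1+m2=m} F_{m1} ⊗ F'_{m2}. If [x] ∈ H(C) and [x'] ∈ H(C') are nonzero classes with well-defined invariants τ_{[x]} and τ_{[x']}, then under the Künneth isomorphism H(C ⊗ C') ≅ H(C) ⊗ H(C'), the class [x] ⊗ [x'] satisfies τ_{[x]⊗[x']} = τ_{[x]} + τ_{[x']}. -/
open TensorProduct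

/-- Additivity of `τ` under tensor product of filtered complexes (abstract
content of Proposition 3.2).  `C`, `C'` are finite-dimensional filtered chain
complexes over `ℤ/2ℤ`; the tensor product `C ⊗ C'` carries the differential
`d ⊗ 1 + 1 ⊗ d'` and the filtration `(F⊗F')_m = Σ_{m₁+m₂=m} F_{m₁} ⊗ F'_{m₂}`.
If `x`, `x'` are cycles representing nonzero classes with invariants
`τ_{[x]} = τ` and `τ_{[x']} = τ'`, then under the Künneth identification the
class `[x] ⊗ [x']`, represented by the cycle `x ⊗ x'`, has
`τ_{[x]⊗[x']} = τ + τ'`. -/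
theorem tau_tensor_additive
    (V V' : Type) [AddCommGroup V] [Module (ZMod 2) V] [FiniteDimensional (ZMod 2) V]
    [AddCommGroup V'] [Module (ZMod 2) V'] [FiniteDimensional (ZMod 2) V']
    (d : V →ₗ[ZMod 2] V) (hd : ∀ v, d (d v) = 0)
    (d' : V' →ₗ[ZMod 2] V') (hd' : ∀ v, d' (d' v) = 0)
    (F : ℤ → Submodule (ZMod 2) V) (F' : ℤ → Submodule (ZMod 2) V')
    (hmono : ∀ ⦃m m' : ℤ⦄, m ≤ m' → F m ≤ F m')
    (hmono' : ∀ ⦃m m' : ℤ⦄, m ≤ m' → F' m ≤ F' m')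
    (hinv : ∀ m, F m ≤ (F m).comap d)
    (hinv' : ∀ m, F' m ≤ (F' m).comap d')
    (j : ℤ) (hbot : ∀ m ≤ -j, F m = ⊥) (hbot' : ∀ m ≤ -j, F' m = ⊥)
    (n : ℤ) (htop : ∀ m ≥ n, F m = ⊤) (htop' : ∀ m ≥ n, F' m = ⊤)
    (x : V) (hx : d x = 0) (hx0 : x ∉ LinearMap.range d)
    (x' : V') (hx' : d' x' = 0) (hx0' : x' ∉ LinearMap.range d')
    (τ τ' : ℤ)
    (hτ : IsLeast {m : ℤ | ∃ y ∈ F m, d y = 0 ∧ x - y ∈ LinearMap.range d} τ)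
    (hτ' : IsLeast {m : ℤ | ∃ y ∈ F' m, d' y = 0 ∧ x' - y ∈ LinearMap.range d'} τ') :
    let dT : V ⊗[ZMod 2] V' →ₗ[ZMod 2] V ⊗[ZMod 2] V' :=
      TensorProduct.map d LinearMap.id + TensorProduct.map LinearMap.id d'
    let FT : ℤ → Submodule (ZMod 2) (V ⊗[ZMod 2] V') := fun m =>
      ⨆ (p : ℤ × ℤ) (_ : p.1 + p.2 = m),
        LinearMap.range (TensorProduct.map (F p.1).subtype (F' p.2).subtype)
    IsLeast {m : ℤ | ∃ w ∈ FT m, dT w = 0 ∧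
      x ⊗ₜ[ZMod 2] x' - w ∈ LinearMap.range dT} (τ + τ') := by
  intro dT FT
  obtain ⟨⟨y, hyF, hyc, z, hz⟩, hτmin⟩ := hτ
  obtain ⟨⟨y', hyF', hyc', z', hz'⟩, hτmin'⟩ := hτ'
  constructor
  · -- membership: the cycle y ⊗ y' works
    refine ⟨y ⊗ₜ y', ?_, ?_, ?_⟩
    · have : y ⊗ₜ[ZMod 2] y' ∈
          LinearMap.range (TensorProduct.map (F τ).subtype (F' τ').subtype) :=
        ⟨(⟨y, hyF⟩ : F τ) ⊗ₜ (⟨y', hyF'⟩ : F' τ'), rfl⟩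
      exact Submodule.mem_iSup_of_mem (τ, τ') (Submodule.mem_iSup_of_mem rfl this)
    · simp [dT, TensorProduct.map_tmul, hyc, hyc']
    · refine ⟨z ⊗ₜ x' + y ⊗ₜ z', ?_⟩
      simp only [dT, LinearMap.add_apply, map_add, TensorProduct.map_tmul,
        LinearMap.id_apply, hz, hz', hx', hyc]
      rw [TensorProduct.tmul_zero, TensorProduct.zero_tmul,
        TensorProduct.sub_tmul, TensorProduct.tmul_sub]
      abel
  · -- lower bound
    rintro m ⟨w, hwF, _, u, hu⟩
    by_contra hlt
    push_neg at hlt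
    -- x is not in F (τ - 1) + range d
    have hxW : x ∉ F (τ - 1) ⊔ LinearMap.range d := by
      intro hmem
      obtain ⟨a, ha, b, ⟨c, hc⟩, hab⟩ := Submodule.mem_sup.mp hmem
      have hda : d a = 0 := by
        have : d x = d a + d (d c) := by rw [← hab, ← hc, map_add]
        rw [hx, hd] at this
        simpa using this.symm
      have : (τ : ℤ) ≤ τ - 1 :=
        hτmin ⟨a, ha, hda, c, by rw [hc]; exact eq_sub_of_add_eq' hab⟩
      omega
    have hxW' : x' ∉ F' (τ' - 1) ⊔ LinearMap.range d' := by
      intro hmem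
      obtain ⟨a, ha, b, ⟨c, hc⟩, hab⟩ := Submodule.mem_sup.mp hmem
      have hda : d' a = 0 := by
        have : d' x' = d' a + d' (d' c) := by rw [← hab, ← hc, map_add]
        rw [hx', hd'] at this
        simpa using this.symm
      have : (τ' : ℤ) ≤ τ' - 1 :=
        hτmin' ⟨a, ha, hda, c, by rw [hc]; exact eq_sub_of_add_eq' hab⟩
      omega
    obtain ⟨f, hfx, hfmap⟩ := Submodule.exists_dual_map_eq_bot_of_notMem hxW inferInstance
    obtain ⟨f', hfx', hfmap'⟩ := Submodule.exists_dual_map_eq_bot_of_notMem hxW' inferInstance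
    have hf0 : ∀ v ∈ F (τ - 1) ⊔ LinearMap.range d, f v = 0 := by
      intro v hv
      have : f v ∈ (F (τ - 1) ⊔ LinearMap.range d).map f := Submodule.mem_map_of_mem hv
      rwa [hfmap, Submodule.mem_bot] at this
    have hf0' : ∀ v ∈ F' (τ' - 1) ⊔ LinearMap.range d', f' v = 0 := by
      intro v hv
      have : f' v ∈ (F' (τ' - 1) ⊔ LinearMap.range d').map f' := Submodule.mem_map_of_mem hv
      rwa [hfmap', Submodule.mem_bot] at this
    have hfd : ∀ v, f (d v) = 0 := fun v => hf0 _ (Submodule.mem_sup_right ⟨v, rfl⟩)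
    have hfd' : ∀ v, f' (d' v) = 0 := fun v => hf0' _ (Submodule.mem_sup_right ⟨v, rfl⟩)
    set g : V ⊗[ZMod 2] V' →ₗ[ZMod 2] ZMod 2 :=
      (TensorProduct.lid (ZMod 2) (ZMod 2)).toLinearMap ∘ₗ TensorProduct.map f f' with hg
    have hgtmul : ∀ (a : V) (b : V'), g (a ⊗ₜ b) = f a * f' b := by
      intro a b
      simp [hg, TensorProduct.map_tmul, TensorProduct.lid_tmul, smul_eq_mul]
    -- g kills dT of anything
    have hgdT : ∀ t, g (dT t) = 0 := by
      intro t
      have h1 : ∀ s, g (TensorProduct.map d LinearMap.id s) = 0 := by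
        intro s
        induction s using TensorProduct.induction_on with
        | zero => simp
        | tmul a b => simp [TensorProduct.map_tmul, hgtmul, hfd]
        | add s t hs ht => rw [map_add, map_add, hs, ht, add_zero]
      have h2 : ∀ s, g (TensorProduct.map LinearMap.id d' s) = 0 := by
        intro s
        induction s using TensorProduct.induction_on with
        | zero => simp
        | tmul a b => simp [TensorProduct.map_tmul, hgtmul, hfd']
        | add s t hs ht => rw [map_add, map_add, hs, ht, add_zero]
      simp only [dT, LinearMap.add_apply, map_add, h1, h2, add_zero]
    -- g kills FT m for m < τ + τ'
    have hgw : g w = 0 := by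
      have hFT : FT m ≤ LinearMap.ker g := by
        refine iSup_le fun p => iSup_le fun hp => ?_
        rintro _ ⟨t, rfl⟩
        rw [LinearMap.mem_ker]
        induction t using TensorProduct.induction_on with
        | zero => simp
        | tmul a b =>
          rw [TensorProduct.map_tmul, hgtmul]
          rcases le_or_gt p.1 (τ - 1) with h1 | h1
          · have : f (a : V) = 0 :=
              hf0 _ (Submodule.mem_sup_left (hmono h1 a.2))
            simp only [Submodule.subtype_apply, this, zero_mul]
          · have h2 : p.2 ≤ τ' - 1 := by omega
            have : f' (b : V') = 0 :=
              hf0' _ (Submodule.mem_sup_left (hmono' h2 b.2))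
            simp only [Submodule.subtype_apply, this, mul_zero]
        | add s t hs ht => rw [map_add, map_add, hs, ht, add_zero]
      exact hFT hwF
    -- contradiction
    have hxx : x ⊗ₜ[ZMod 2] x' = w + dT u := by rw [hu]; abel
    have : f x * f' x' = 0 := by
      rw [← hgtmul, hxx, map_add, hgw, hgdT, add_zero]
    rcases mul_eq_zero.mp this with h | h
    · exact hfx h
    · exact hfx' h
end

section
/- Under the Künneth identification, [x]⊗[x'] lies in the image of H((F⊗F')_m) → H(C⊗C') if and only if there exist m1, m2 with m1 + m2 = m, [x] ∈ Im(H(F_{m1}) → H(C)) and [x'] ∈ Im(H(F'_{m2}) → H(C')). -/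
/-!
If `[x]` is represented in `F_{m₁}` and `[x']` in `F'_{m₂}`, the product of the representatives
represents `[x] ⊗ [x']` in `(F ⊗ F')_{m₁ + m₂}`. Conversely, let `k` be the least level at which
`[x]` is represented. Then `x ∉ Im d + F_{k-1}`, so some linear form `φ` kills `Im d + F_{k-1}`
but not `x`. Contraction with `φ`, `a ⊗ b ↦ φ(a) b`, is a chain map `C ⊗ C' → C'` sending
`(F ⊗ F')_m` into `F'_{m-k}` and `x ⊗ x'` to `φ(x) x'`, so it turns a representative of
`[x] ⊗ [x']` in `(F ⊗ F')_m` into one of `[x']` in `F'_{m-k}`.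
-/

open TensorProduct

section Ring

variable {R V V' : Type*} [CommRing R] [AddCommGroup V] [Module R V] [AddCommGroup V'] [Module R V']

-- No Koszul sign: this is the differential of `C ⊗ C'` in characteristic 2.
def tensorDifferential (d : V →ₗ[R] V) (d' : V' →ₗ[R] V') : V ⊗[R] V' →ₗ[R] V ⊗[R] V' :=
  map d LinearMap.id + map LinearMap.id d'

def tensorFiltration (F : ℤ → Submodule R V) (F' : ℤ → Submodule R V') (m : ℤ) :
    Submodule R (V ⊗[R] V') :=
  ⨆ (p : ℤ × ℤ) (_ : p.1 + p.2 = m), LinearMap.range (map (F p.1).subtype (F' p.2).subtype)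

theorem tmul_mem_tensorFiltration {F : ℤ → Submodule R V} {F' : ℤ → Submodule R V'}
    {m₁ m₂ : ℤ} {y : V} {y' : V'} (hy : y ∈ F m₁) (hy' : y' ∈ F' m₂) :
    y ⊗ₜ[R] y' ∈ tensorFiltration F F' (m₁ + m₂) :=
  Submodule.mem_iSup_of_mem (m₁, m₂) <| Submodule.mem_iSup_of_mem rfl
    ⟨⟨y, hy⟩ ⊗ₜ ⟨y', hy'⟩, rfl⟩

theorem exists_homologous_cycle_mem_iff {d : V →ₗ[R] V} (hd : ∀ v, d (d v) = 0) {x : V}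
    (hx : d x = 0) (W : Submodule R V) :
    (∃ y ∈ W, d y = 0 ∧ x - y ∈ LinearMap.range d) ↔ x ∈ LinearMap.range d ⊔ W := by
  constructor
  · rintro ⟨y, hyW, -, hxy⟩
    simpa using Submodule.add_mem_sup hxy hyW
  · intro h
    obtain ⟨_, ⟨z, rfl⟩, y, hyW, rfl⟩ := Submodule.mem_sup.mp h
    refine ⟨y, hyW, ?_, ⟨z, by abel⟩⟩
    simpa [hd z] using hx

theorem exists_tensor_cycle_of_homologous {d : V →ₗ[R] V} {d' : V' →ₗ[R] V'}
    {F : ℤ → Submodule R V} {F' : ℤ → Submodule R V'} {x : V} {x' : V'} (hx' : d' x' = 0)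
    {m₁ m₂ : ℤ} (hy : ∃ y ∈ F m₁, d y = 0 ∧ x - y ∈ LinearMap.range d)
    (hy' : ∃ y' ∈ F' m₂, d' y' = 0 ∧ x' - y' ∈ LinearMap.range d') :
    ∃ w ∈ tensorFiltration F F' (m₁ + m₂), tensorDifferential d d' w = 0 ∧
      x ⊗ₜ[R] x' - w ∈ LinearMap.range (tensorDifferential d d') := by
  obtain ⟨y, hyF, hyc, z, hz⟩ := hy
  obtain ⟨y', hyF', hyc', z', hz'⟩ := hy'
  refine ⟨y ⊗ₜ y', tmul_mem_tensorFiltration hyF hyF', by simp [tensorDifferential, hyc, hyc'],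
    z ⊗ₜ x' + y ⊗ₜ z', ?_⟩
  -- `x ⊗ x' - y ⊗ y' = (x - y) ⊗ x' + y ⊗ (x' - y')`
  simp only [tensorDifferential, LinearMap.add_apply, map_add, map_tmul, LinearMap.id_apply,
    hz, hz', hx', hyc, tmul_zero, zero_tmul, add_zero, zero_add, sub_tmul, tmul_sub]
  abel

theorem exists_least_level_homologous {d : V →ₗ[R] V} {F : ℤ → Submodule R V} {j n : ℤ}
    (hbot : ∀ m ≤ -j, F m = ⊥) (htop : ∀ m ≥ n, F m = ⊤) {x : V} (hx0 : x ∉ LinearMap.range d) :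
    ∃ k, x ∈ LinearMap.range d ⊔ F k ∧ x ∉ LinearMap.range d ⊔ F (k - 1) := by
  obtain ⟨k, hk, hleast⟩ := Int.exists_least_of_bdd (P := fun k => x ∈ LinearMap.range d ⊔ F k)
    ⟨-j + 1, fun k hk => by
      by_contra! h
      simp [hbot k (by omega), hx0] at hk⟩
    ⟨n, by simp [htop n le_rfl]⟩
  exact ⟨k, hk, fun h => by linarith [hleast _ h]⟩

def leftContraction (φ : Module.Dual R V) : V ⊗[R] V' →ₗ[R] V' :=
  (TensorProduct.lid R V').toLinearMap ∘ₗ φ.rTensor V'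

@[simp]
theorem leftContraction_tmul (φ : Module.Dual R V) (a : V) (b : V') :
    leftContraction φ (a ⊗ₜ[R] b) = φ a • b := by
  simp [leftContraction]

theorem leftContraction_tensorDifferential {φ : Module.Dual R V} {d : V →ₗ[R] V}
    (hφd : ∀ v, φ (d v) = 0) (d' : V' →ₗ[R] V') (t : V ⊗[R] V') :
    leftContraction φ (tensorDifferential d d' t) = d' (leftContraction φ t) := by
  induction t using TensorProduct.induction_on with
  | zero => simp
  | tmul a b => simp [tensorDifferential, hφd]
  | add t u ht hu => simp only [map_add, ht, hu]

theorem leftContraction_mem_of_mem_tensorFiltration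
    {F : ℤ → Submodule R V} {F' : ℤ → Submodule R V'}
    (hmono' : ∀ ⦃m m' : ℤ⦄, m ≤ m' → F' m ≤ F' m') (φ : Module.Dual R V) {k : ℤ}
    (hφ : ∀ p < k, ∀ a ∈ F p, φ a = 0) {m : ℤ} {w : V ⊗[R] V'}
    (hw : w ∈ tensorFiltration F F' m) :
    leftContraction φ w ∈ F' (m - k) := by
  suffices tensorFiltration F F' m ≤ (F' (m - k)).comap (leftContraction φ) from this hw
  refine iSup_le fun p => iSup_le fun hp => ?_
  rw [range_map_eq_span_tmul, Submodule.span_le]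
  rintro _ ⟨a, b, rfl⟩
  rcases lt_or_ge p.1 k with hk | hk
  · simp [hφ p.1 hk a a.2]
  · simpa using Submodule.smul_mem _ _ (hmono' (by omega) b.2)

end Ring

section Field

variable {K V V' : Type*} [Field K] [AddCommGroup V] [Module K V] [AddCommGroup V'] [Module K V']

theorem exists_homologous_cycle_of_tensor_homologous {d : V →ₗ[K] V} {d' : V' →ₗ[K] V'}
    {F : ℤ → Submodule K V} {F' : ℤ → Submodule K V'}
    (hmono' : ∀ ⦃m m' : ℤ⦄, m ≤ m' → F' m ≤ F' m') {x : V} {x' : V'} {φ : Module.Dual K V}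
    (hφd : ∀ v, φ (d v) = 0) (hφx : φ x ≠ 0) {k : ℤ} (hφ : ∀ p < k, ∀ a ∈ F p, φ a = 0)
    {m : ℤ} {w : V ⊗[K] V'} (hwF : w ∈ tensorFiltration F F' m)
    (hwc : tensorDifferential d d' w = 0)
    (hxw : x ⊗ₜ[K] x' - w ∈ LinearMap.range (tensorDifferential d d')) :
    ∃ y' ∈ F' (m - k), d' y' = 0 ∧ x' - y' ∈ LinearMap.range d' := by
  obtain ⟨s, hs⟩ := hxw
  refine ⟨(φ x)⁻¹ • leftContraction φ w,
    Submodule.smul_mem _ _ (leftContraction_mem_of_mem_tensorFiltration hmono' φ hφ hwF),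
    ?_, (φ x)⁻¹ • leftContraction φ s, ?_⟩
  · rw [map_smul, ← leftContraction_tensorDifferential hφd, hwc, map_zero, smul_zero]
  · rw [map_smul, ← leftContraction_tensorDifferential hφd, hs, map_sub, leftContraction_tmul,
      smul_sub, smul_smul, inv_mul_cancel₀ hφx, one_smul]

end Field

theorem tensor_filtration_image_iff_general
    (V V' : Type) [AddCommGroup V] [Module (ZMod 2) V]
    [AddCommGroup V'] [Module (ZMod 2) V']
    (d : V →ₗ[ZMod 2] V) (hd : ∀ v, d (d v) = 0)
    (d' : V' →ₗ[ZMod 2] V')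
    (F : ℤ → Submodule (ZMod 2) V) (F' : ℤ → Submodule (ZMod 2) V')
    (hmono : ∀ ⦃m m' : ℤ⦄, m ≤ m' → F m ≤ F m')
    (hmono' : ∀ ⦃m m' : ℤ⦄, m ≤ m' → F' m ≤ F' m')
    (j : ℤ) (hbot : ∀ m ≤ -j, F m = ⊥)
    (n : ℤ) (htop : ∀ m ≥ n, F m = ⊤)
    (x : V) (hx : d x = 0) (hx0 : x ∉ LinearMap.range d)
    (x' : V') (hx' : d' x' = 0)
    (m : ℤ) :
    let dT : V ⊗[ZMod 2] V' →ₗ[ZMod 2] V ⊗[ZMod 2] V' :=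
      TensorProduct.map d LinearMap.id + TensorProduct.map LinearMap.id d'
    let FT : ℤ → Submodule (ZMod 2) (V ⊗[ZMod 2] V') := fun m =>
      ⨆ (p : ℤ × ℤ) (_ : p.1 + p.2 = m),
        LinearMap.range (TensorProduct.map (F p.1).subtype (F' p.2).subtype)
    ((∃ w ∈ FT m, dT w = 0 ∧ x ⊗ₜ[ZMod 2] x' - w ∈ LinearMap.range dT) ↔
      (∃ m₁ m₂ : ℤ, m₁ + m₂ = m ∧
        (∃ y ∈ F m₁, d y = 0 ∧ x - y ∈ LinearMap.range d) ∧
        (∃ y' ∈ F' m₂, d' y' = 0 ∧ x' - y' ∈ LinearMap.range d'))) := by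
  intro dT FT
  change (∃ w ∈ tensorFiltration F F' m, tensorDifferential d d' w = 0 ∧
    x ⊗ₜ[ZMod 2] x' - w ∈ LinearMap.range (tensorDifferential d d')) ↔ _
  constructor
  · rintro ⟨w, hwF, hwc, hxw⟩
    obtain ⟨k, hk, hk'⟩ := exists_least_level_homologous hbot htop hx0
    obtain ⟨φ, hφx, hφW⟩ := Submodule.exists_dual_map_eq_bot_of_notMem hk' inferInstance
    have hφ : ∀ v ∈ LinearMap.range d ⊔ F (k - 1), φ v = 0 := fun v hv =>
      LinearMap.le_ker_iff_map.mpr hφW hv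
    refine ⟨k, m - k, by omega, (exists_homologous_cycle_mem_iff hd hx _).mpr hk, ?_⟩
    exact exists_homologous_cycle_of_tensor_homologous hmono'
      (fun v => hφ _ (Submodule.mem_sup_left ⟨v, rfl⟩)) hφx
      (fun p hp a ha => hφ a (Submodule.mem_sup_right (hmono (by omega) ha))) hwF hwc hxw
  · rintro ⟨m₁, m₂, rfl, hy, hy'⟩
    exact exists_tensor_cycle_of_homologous hx' hy hy'

/-- Under the Künneth identification, the class `[x] ⊗ [x']` (represented by
the cycle `x ⊗ x'`) lies in the image of `H((F⊗F')_m) → H(C ⊗ C')` if and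
only if there exist `m₁ + m₂ = m` with `[x] ∈ Im (H(F_{m₁}) → H(C))` and
`[x'] ∈ Im (H(F'_{m₂}) → H(C'))`. -/
theorem tensor_filtration_image_iff
    (V V' : Type) [AddCommGroup V] [Module (ZMod 2) V] [FiniteDimensional (ZMod 2) V]
    [AddCommGroup V'] [Module (ZMod 2) V'] [FiniteDimensional (ZMod 2) V']
    (d : V →ₗ[ZMod 2] V) (hd : ∀ v, d (d v) = 0)
    (d' : V' →ₗ[ZMod 2] V') (hd' : ∀ v, d' (d' v) = 0)
    (F : ℤ → Submodule (ZMod 2) V) (F' : ℤ → Submodule (ZMod 2) V')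
    (hmono : ∀ ⦃m m' : ℤ⦄, m ≤ m' → F m ≤ F m')
    (hmono' : ∀ ⦃m m' : ℤ⦄, m ≤ m' → F' m ≤ F' m')
    (hinv : ∀ m, F m ≤ (F m).comap d)
    (hinv' : ∀ m, F' m ≤ (F' m).comap d')
    (j : ℤ) (hbot : ∀ m ≤ -j, F m = ⊥) (hbot' : ∀ m ≤ -j, F' m = ⊥)
    (n : ℤ) (htop : ∀ m ≥ n, F m = ⊤) (htop' : ∀ m ≥ n, F' m = ⊤)
    (x : V) (hx : d x = 0) (hx0 : x ∉ LinearMap.range d)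
    (x' : V') (hx' : d' x' = 0) (hx0' : x' ∉ LinearMap.range d')
    (m : ℤ) :
    let dT : V ⊗[ZMod 2] V' →ₗ[ZMod 2] V ⊗[ZMod 2] V' :=
      TensorProduct.map d LinearMap.id + TensorProduct.map LinearMap.id d'
    let FT : ℤ → Submodule (ZMod 2) (V ⊗[ZMod 2] V') := fun m =>
      ⨆ (p : ℤ × ℤ) (_ : p.1 + p.2 = m),
        LinearMap.range (TensorProduct.map (F p.1).subtype (F' p.2).subtype)
    ((∃ w ∈ FT m, dT w = 0 ∧ x ⊗ₜ[ZMod 2] x' - w ∈ LinearMap.range dT) ↔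
      (∃ m₁ m₂ : ℤ, m₁ + m₂ = m ∧
        (∃ y ∈ F m₁, d y = 0 ∧ x - y ∈ LinearMap.range d) ∧
        (∃ y' ∈ F' m₂, d' y' = 0 ∧ x' - y' ∈ LinearMap.range d'))) :=
  tensor_filtration_image_iff_general V V' d hd d' F F' hmono hmono' j hbot n htop x hx hx0 x' hx' m
end

section
/- Let C be a finite-dimensional filtered chain complex over Z/2Z with filtration F_m, and [y] ∈ H(C*) nonzero. Define τ*_{[y]} = min{m : ∃ α ∈ Im(I_m) with ⟨[y], α⟩ ≠ 0}. Then: (a) if m < τ*_{[y]}, every α ∈ H(C) with ⟨[y], α⟩ ≠ 0 is not killed by the map on homology induced by the projection C → C/F_{m-1}; (b) if m > τ*_{[y]}, there exists α ∈ H(C) with ⟨[y], α⟩ ≠ 0 whose image under the map on homology induced by the projection C → C/F_{m-1} vanishes. -/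
/-- Abstract content of Proposition 4.2.  Let `(V, d)` be a finite-dimensional
filtered chain complex over `ℤ/2ℤ` and let `y` be a cocycle representing a
nonzero class of `H(C*)`, with
`t = τ*_{[y]} = min {m : ∃ α ∈ Im I_m, ⟨[y], α⟩ ≠ 0}`.  Then:
(a) if `m < t`, every cycle `α` pairing nontrivially with `y` has nonzero
image in the homology of the quotient complex `C/F_{m-1}`;
(b) if `m > t`, there exists a cycle `α` pairing nontrivially with `y` whose
image in the homology of `C/F_{m-1}` vanishes. -/
theorem tau_star_projection_criterion
    (V : Type) [AddCommGroup V] [Module (ZMod 2) V] [FiniteDimensional (ZMod 2) V]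
    (d : V →ₗ[ZMod 2] V) (hd : ∀ v, d (d v) = 0)
    (F : ℤ → Submodule (ZMod 2) V)
    (hmono : ∀ ⦃m m' : ℤ⦄, m ≤ m' → F m ≤ F m')
    (hinv : ∀ m, F m ≤ (F m).comap d)
    (j : ℤ) (hbot : ∀ m ≤ -j, F m = ⊥)
    (n : ℤ) (htop : ∀ m ≥ n, F m = ⊤)
    (y : Module.Dual (ZMod 2) V) (hy : LinearMap.dualMap d y = 0)
    (hy0 : y ∉ LinearMap.range (LinearMap.dualMap d))
    (t : ℤ)
    (ht : IsLeast {m : ℤ | ∃ α ∈ F m, d α = 0 ∧ y α ≠ 0} t) :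
    (∀ m : ℤ, m < t → ∀ α : V, d α = 0 → y α ≠ 0 →
      (F (m - 1)).mkQ α ∉
        LinearMap.range (Submodule.mapQ (F (m - 1)) (F (m - 1)) d (hinv (m - 1)))) ∧
    (∀ m : ℤ, t < m → ∃ α : V, d α = 0 ∧ y α ≠ 0 ∧
      (F (m - 1)).mkQ α ∈
        LinearMap.range (Submodule.mapQ (F (m - 1)) (F (m - 1)) d (hinv (m - 1)))) := by
  constructor
  · intro m hm α hdα hyα hmem
    obtain ⟨q, hq⟩ := hmem
    obtain ⟨β, rfl⟩ := (F (m - 1)).mkQ_surjective q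
    rw [Submodule.mkQ_apply, Submodule.mkQ_apply, Submodule.mapQ_apply] at hq
    have hsub : d β - α ∈ F (m - 1) := (Submodule.Quotient.eq _).mp hq
    have hmem' : (m - 1) ∈ {m : ℤ | ∃ α ∈ F m, d α = 0 ∧ y α ≠ 0} := by
      refine ⟨d β - α, hsub, ?_, ?_⟩
      · simp [map_sub, hd, hdα]
      · have hydβ : y (d β) = 0 := by
          have := congrFun (congrArg DFunLike.coe hy) β
          simpa [LinearMap.dualMap_apply] using this
        simp [map_sub, hydβ, hyα]
    have := ht.2 hmem'
    omega
  · intro m hm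
    obtain ⟨α, hαF, hdα, hyα⟩ := ht.1
    refine ⟨α, hdα, hyα, 0, ?_⟩
    have : α ∈ F (m - 1) := hmono (by omega) hαF
    simp only [map_zero, Submodule.mkQ_apply]
    exact ((Submodule.Quotient.mk_eq_zero _).mpr this).symm
end
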